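/- Let λ be the largest eigenvalue of M = k^2 L_B + k L_H + k L_V for a free-form Sudoku graph FSud(n,T). Then λ + k^2 − 1 is the largest eigenvalue of the blow-up adjacency matrix Â; in particular λ ≥ (n−1)k^2, while every eigenvalue of Â arising from the sets X_V and X_H is at most (n−1)k − 1 and all remaining eigenvalues from X_E equal −1. -/

import Mathlib

open Kronecker

/-- The `k × k` all-ones matrix. -/
def Jmat (k : ℕ) : Matrix (Fin k) (Fin k) ℝ := Matrix.of fun _ _ => 1

/-- The adjacency matrix of the k-fold blow-up of a free-form Sudoku graph. -/
def AhatCells (n k : ℕ) (LB LH LV : Matrix (Fin n × Fin n) (Fin n × Fin n) ℝ) :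
    Matrix ((Fin n × Fin n) × (Fin k × Fin k)) ((Fin n × Fin n) × (Fin k × Fin k)) ℝ :=
  LB ⊗ₖ (Jmat k ⊗ₖ Jmat k) + LH ⊗ₖ ((1 : Matrix (Fin k) (Fin k) ℝ) ⊗ₖ Jmat k)
    + LV ⊗ₖ (Jmat k ⊗ₖ (1 : Matrix (Fin k) (Fin k) ℝ))
    + (1 : Matrix (Fin n × Fin n) (Fin n × Fin n) ℝ)
        ⊗ₖ (Jmat k ⊗ₖ Jmat k - (1 : Matrix (Fin k × Fin k) (Fin k × Fin k) ℝ))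

section Helpers
open Matrix
variable {ι κ : Type*} [Fintype ι] [DecidableEq ι] [Fintype κ] [DecidableEq κ]

set_option linter.unusedSectionVars false

lemma herm_smul {A : Matrix ι ι ℝ} (hA : A.IsHermitian) (c : ℝ) :
    (c • A).IsHermitian := by
  unfold Matrix.IsHermitian
  rw [Matrix.conjTranspose_smul, star_trivial, hA.eq]

lemma mem_spectrum_iff_eigenvector
    (A : Matrix ι ι ℝ) (μ : ℝ) :
    μ ∈ spectrum ℝ A ↔ ∃ v, v ≠ 0 ∧ A.mulVec v = μ • v := by
  rw [← AlgEquiv.spectrum_eq (Matrix.toLinAlgEquiv' (R := ℝ) (n := ι)) A,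
      ← Module.End.hasEigenvalue_iff_mem_spectrum]
  constructor
  · intro h
    obtain ⟨v, hv, hv0⟩ := h.exists_hasEigenvector
    refine ⟨v, hv0, ?_⟩
    have := Module.End.mem_eigenspace_iff.mp hv
    simpa [Matrix.toLinAlgEquiv'_apply] using this
  · rintro ⟨v, hv0, hv⟩
    refine Module.End.hasEigenvalue_of_hasEigenvector (x := v)
      ⟨Module.End.mem_eigenspace_iff.mpr ?_, hv0⟩
    simpa [Matrix.toLinAlgEquiv'_apply] using hv

lemma spectrum_le_of_psd (A : Matrix ι ι ℝ) (c : ℝ)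
    (h : (c • (1 : Matrix ι ι ℝ) - A).PosSemidef) :
    ∀ μ ∈ spectrum ℝ A, μ ≤ c := by
  intro μ hμ
  obtain ⟨v, hv0, hv⟩ := (mem_spectrum_iff_eigenvector A μ).mp hμ
  have h2 := h.dotProduct_mulVec_nonneg v
  have hmv : (c • (1 : Matrix ι ι ℝ) - A).mulVec v = (c - μ) • v := by
    rw [Matrix.sub_mulVec, Matrix.smul_mulVec, Matrix.one_mulVec, hv, sub_smul]
  rw [hmv] at h2
  have hnn : (0:ℝ) ≤ dotProduct v v :=
    Finset.sum_nonneg fun i _ => mul_self_nonneg _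
  have hne : dotProduct v v ≠ 0 :=
    fun h' => hv0 (dotProduct_self_eq_zero.mp h')
  have hvv : 0 < dotProduct v v := lt_of_le_of_ne hnn (Ne.symm hne)
  have heq : dotProduct (star v) ((c - μ) • v) = (c - μ) * dotProduct v v := by
    simp [dotProduct_smul, star_trivial, smul_eq_mul]
  rw [heq] at h2
  nlinarith

lemma psd_of_spectrum_le (A : Matrix ι ι ℝ) (hA : A.IsHermitian) (c : ℝ)
    (h : ∀ μ ∈ spectrum ℝ A, μ ≤ c) :
    (c • (1 : Matrix ι ι ℝ) - A).PosSemidef := by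
  have hB : (c • (1 : Matrix ι ι ℝ) - A).IsHermitian :=
    (herm_smul Matrix.isHermitian_one c).sub hA
  refine hB.posSemidef_iff_eigenvalues_nonneg.mpr fun i => ?_
  have hmem := hB.eigenvalues_mem_spectrum_real i
  set μ' := hB.eigenvalues i
  obtain ⟨v, hv0, hv⟩ := (mem_spectrum_iff_eigenvector _ μ').mp hmem
  rw [Matrix.sub_mulVec, Matrix.smul_mulVec, Matrix.one_mulVec] at hv
  have h' : A.mulVec v = (c - μ') • v := by
    rw [sub_smul, ← hv]
    module
  have hc' : c - μ' ≤ c := h _ ((mem_spectrum_iff_eigenvector A _).mpr ⟨v, hv0, h'⟩)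
  exact (by linarith : (0:ℝ) ≤ μ')

lemma kron_mulVec (A : Matrix ι ι ℝ) (B : Matrix κ κ ℝ) (x : ι → ℝ) (y : κ → ℝ) :
    (A ⊗ₖ B).mulVec (fun p => x p.1 * y p.2) =
      fun p => A.mulVec x p.1 * B.mulVec y p.2 := by
  funext p
  simp only [Matrix.mulVec, dotProduct, Fintype.sum_prod_type,
    Matrix.kroneckerMap_apply]
  rw [Finset.sum_mul_sum]
  exact Finset.sum_congr rfl fun i _ => Finset.sum_congr rfl fun j _ => by ring

lemma psd_kron {A : Matrix ι ι ℝ} {B : Matrix κ κ ℝ}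
    (hA : A.PosSemidef) (hB : B.PosSemidef) : (A ⊗ₖ B).PosSemidef := by
  exact hA.kronecker hB

lemma psd_smul {A : Matrix ι ι ℝ} (hA : A.PosSemidef) {c : ℝ} (hc : 0 ≤ c) :
    (c • A).PosSemidef := by
  refine Matrix.PosSemidef.of_dotProduct_mulVec_nonneg (herm_smul hA.1 c) fun x => ?_
  rw [Matrix.smul_mulVec, dotProduct_smul, smul_eq_mul]
  exact mul_nonneg hc (hA.dotProduct_mulVec_nonneg x)

lemma spectrum_le_row_sums (A : Matrix ι ι ℝ) (r : ℝ)
    (hd : ∀ i, A i i = 0) (h0 : ∀ i j, 0 ≤ A i j) (hr : ∀ i, ∑ j, A i j ≤ r) :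
    ∀ μ ∈ spectrum ℝ A, μ ≤ r := by
  intro μ hμ
  have h1 : Module.End.HasEigenvalue (Matrix.toLin' A) μ := by
    rw [Module.End.hasEigenvalue_iff_mem_spectrum]
    have h2 : spectrum ℝ (Matrix.toLin' A) = spectrum ℝ (Matrix.toLinAlgEquiv' A) := rfl
    rw [h2, AlgEquiv.spectrum_eq (Matrix.toLinAlgEquiv' (R := ℝ) (n := ι)) A]
    exact hμ
  obtain ⟨i, hi⟩ := eigenvalue_mem_ball h1
  rw [Metric.mem_closedBall, Real.dist_eq, hd i, sub_zero] at hi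
  have h2 : (∑ j ∈ Finset.univ.erase i, ‖A i j‖) ≤ ∑ j, A i j := by
    have h3 : ∀ j, ‖A i j‖ = A i j := fun j => Real.norm_of_nonneg (h0 i j)
    simp only [h3]
    exact Finset.sum_le_sum_of_subset_of_nonneg (Finset.subset_univ _)
      (fun j _ _ => h0 i j)
  calc μ ≤ |μ| := le_abs_self μ
    _ ≤ ∑ j ∈ Finset.univ.erase i, ‖A i j‖ := hi
    _ ≤ ∑ j, A i j := h2
    _ ≤ r := hr i

lemma psd_of_sq {A : Matrix ι ι ℝ} (hA : A.IsHermitian) {c : ℝ} (hc : 0 < c)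
    (h : A * A = c • A) : A.PosSemidef := by
  have key : A = c⁻¹ • (Aᴴ * A) := by
    rw [hA.eq, h, smul_smul, inv_mul_cancel₀ hc.ne', one_smul]
  rw [key]
  exact psd_smul (Matrix.posSemidef_conjTranspose_mul_self A) (by positivity)

end Helpers

lemma Ahat_mulVec (n k : ℕ) (LB LH LV : Matrix (Fin n × Fin n) (Fin n × Fin n) ℝ)
    (x : Fin n × Fin n → ℝ) (w : Fin k × Fin k → ℝ) :
    (AhatCells n k LB LH LV).mulVec (fun p => x p.1 * w p.2) =
      fun p => LB.mulVec x p.1 * ((Jmat k ⊗ₖ Jmat k).mulVec w) p.2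
        + LH.mulVec x p.1 * (((1 : Matrix (Fin k) (Fin k) ℝ) ⊗ₖ Jmat k).mulVec w) p.2
        + LV.mulVec x p.1 * ((Jmat k ⊗ₖ (1 : Matrix (Fin k) (Fin k) ℝ)).mulVec w) p.2
        + x p.1 * ((Jmat k ⊗ₖ Jmat k).mulVec w p.2 - w p.2) := by
  rw [AhatCells, Matrix.add_mulVec, Matrix.add_mulVec, Matrix.add_mulVec]
  rw [kron_mulVec LB _ x w, kron_mulVec LH _ x w, kron_mulVec LV _ x w,
    kron_mulVec 1 _ x w]
  funext p
  simp only [Pi.add_apply]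
  rw [Matrix.sub_mulVec, Matrix.one_mulVec]
  simp [Matrix.one_mulVec]
set_option maxHeartbeats 2000000 in
/-- If `λ` is the largest eigenvalue of `M = k²L_B + kL_H + kL_V`, then `λ + k² − 1` is the
largest eigenvalue of the blow-up adjacency matrix `Â`; moreover `λ ≥ (n−1)k²`, every
eigenvalue of `Â` arising from `X_V` or `X_H` is at most `(n−1)k − 1`, and the vectors of
`X_E` are eigenvectors for the eigenvalue `−1`. -/
theorem blowup_largest_eigenvalue (n k : ℕ) (hk : 0 < k)
    (block : Fin n × Fin n → Fin n)
    (hT : ∀ b : Fin n, (Finset.univ.filter fun c : Fin n × Fin n => block c = b).card = n)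
    (LB LH LV : Matrix (Fin n × Fin n) (Fin n × Fin n) ℝ)
    (hB : ∀ u v : Fin n × Fin n,
      LB u v = if u ≠ v ∧ block u = block v then 1 else 0)
    (hH : ∀ u v : Fin n × Fin n,
      LH u v = if u.1 = v.1 ∧ block u ≠ block v then 1 else 0)
    (hV : ∀ u v : Fin n × Fin n,
      LV u v = if u.2 = v.2 ∧ block u ≠ block v then 1 else 0)
    (lam : ℝ)
    (hlam : lam ∈ spectrum ℝ (((k : ℝ) ^ 2) • LB + (k : ℝ) • LH + (k : ℝ) • LV))
    (hmax : ∀ μ ∈ spectrum ℝ (((k : ℝ) ^ 2) • LB + (k : ℝ) • LH + (k : ℝ) • LV), μ ≤ lam) :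
    -- λ + k² − 1 is the largest eigenvalue of Â
    ((lam + (k : ℝ) ^ 2 - 1) ∈ spectrum ℝ (AhatCells n k LB LH LV) ∧
      ∀ μ ∈ spectrum ℝ (AhatCells n k LB LH LV), μ ≤ lam + (k : ℝ) ^ 2 - 1) ∧
    -- λ ≥ (n−1)k²
    ((n : ℝ) - 1) * (k : ℝ) ^ 2 ≤ lam ∧
    -- eigenvalues arising from X_V and X_H are at most (n−1)k − 1
    (∀ lam' alpha : ℝ, (lam' ∈ spectrum ℝ LV ∨ lam' ∈ spectrum ℝ LH) →
      alpha ∈ spectrum ℝ (Jmat k) → lam' * alpha - 1 ≤ ((n : ℝ) - 1) * k - 1) ∧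
    -- vectors of X_E are eigenvectors for the eigenvalue −1
    (∀ (x : Fin n × Fin n → ℝ) (y z : Fin k → ℝ),
      (Jmat k).mulVec y = 0 → (Jmat k).mulVec z = 0 →
      (AhatCells n k LB LH LV).mulVec
          (fun p : (Fin n × Fin n) × (Fin k × Fin k) => x p.1 * y p.2.1 * z p.2.2) =
        (-1 : ℝ) •
          (fun p : (Fin n × Fin n) × (Fin k × Fin k) => x p.1 * y p.2.1 * z p.2.2)) := by
  have hkR : ((k:ℝ)) ≠ 0 := Nat.cast_ne_zero.mpr hk.ne'
  have hkpos : (0:ℝ) < k := Nat.cast_pos.mpr hk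
  have hk1 : (1:ℝ) ≤ k := Nat.one_le_cast.mpr hk
  -- n is positive
  have hn : 0 < n := by
    rcases Nat.eq_zero_or_pos n with h | h
    · exfalso
      subst h
      exact (spectrum.mem_iff.mp hlam) (isUnit_of_subsingleton _)
    · exact h
  have hn1 : (1:ℝ) ≤ n := Nat.one_le_cast.mpr hn
  -- Hermitian facts
  have hLBh : LB.IsHermitian := by
    ext i j
    simp only [Matrix.conjTranspose_apply, star_trivial]
    rw [hB, hB]
    refine if_congr ?_ rfl rfl
    constructor
    · rintro ⟨h1, h2⟩; exact ⟨Ne.symm h1, h2.symm⟩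
    · rintro ⟨h1, h2⟩; exact ⟨Ne.symm h1, h2.symm⟩
  have hLHh : LH.IsHermitian := by
    ext i j
    simp only [Matrix.conjTranspose_apply, star_trivial]
    rw [hH, hH]
    refine if_congr ?_ rfl rfl
    constructor
    · rintro ⟨h1, h2⟩; exact ⟨h1.symm, Ne.symm h2⟩
    · rintro ⟨h1, h2⟩; exact ⟨h1.symm, Ne.symm h2⟩
  have hLVh : LV.IsHermitian := by
    ext i j
    simp only [Matrix.conjTranspose_apply, star_trivial]
    rw [hV, hV]
    refine if_congr ?_ rfl rfl
    constructor
    · rintro ⟨h1, h2⟩; exact ⟨h1.symm, Ne.symm h2⟩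
    · rintro ⟨h1, h2⟩; exact ⟨h1.symm, Ne.symm h2⟩
  -- entry facts
  have hLH0 : ∀ u v, 0 ≤ LH u v := by
    intro u v; rw [hH]; split_ifs <;> norm_num
  have hLV0 : ∀ u v, 0 ≤ LV u v := by
    intro u v; rw [hV]; split_ifs <;> norm_num
  have hLB0 : ∀ u v, 0 ≤ LB u v := by
    intro u v; rw [hB]; split_ifs <;> norm_num
  have hLHd : ∀ u, LH u u = 0 := by intro u; rw [hH]; simp
  have hLVd : ∀ u, LV u u = 0 := by intro u; rw [hV]; simp
  -- row sums
  have hcol : ∀ a : Fin n, (∑ v : Fin n × Fin n, if v.1 = a then (1:ℝ) else 0) = n := by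
    intro a
    rw [Fintype.sum_prod_type]
    have h1 : ∀ x : Fin n, (∑ _y : Fin n, if x = a then (1:ℝ) else 0)
        = if x = a then (n:ℝ) else 0 := by
      intro x; split_ifs <;> simp
    calc (∑ x : Fin n, ∑ y : Fin n, if (x, y).1 = a then (1:ℝ) else 0)
        = ∑ x : Fin n, (if x = a then (n:ℝ) else 0) :=
          Finset.sum_congr rfl fun x _ => h1 x
      _ = n := by simp
  have hrow : ∀ a : Fin n, (∑ v : Fin n × Fin n, if v.2 = a then (1:ℝ) else 0) = n := by
    intro a
    rw [Fintype.sum_prod_type_right]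
    have h1 : ∀ x : Fin n, (∑ _y : Fin n, if x = a then (1:ℝ) else 0)
        = if x = a then (n:ℝ) else 0 := by
      intro x; split_ifs <;> simp
    calc (∑ x : Fin n, ∑ y : Fin n, if (y, x).2 = a then (1:ℝ) else 0)
        = ∑ x : Fin n, (if x = a then (n:ℝ) else 0) :=
          Finset.sum_congr rfl fun x _ => h1 x
      _ = n := by simp
  have rowB : ∀ u, ∑ v, LB u v = (n:ℝ) - 1 := by
    intro u
    have h1 : ∀ v, LB u v =
        (if block v = block u then (1:ℝ) else 0) - (if v = u then 1 else 0) := by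
      intro v
      rw [hB]
      by_cases h1 : v = u
      · subst h1; simp
      · have h2 : (u ≠ v ∧ block u = block v) ↔ (block v = block u) := by
          constructor
          · rintro ⟨-, h2⟩; exact h2.symm
          · intro h2; exact ⟨Ne.symm h1, h2.symm⟩
        rw [if_congr h2 rfl rfl, if_neg h1, sub_zero]
    rw [Finset.sum_congr rfl fun v _ => h1 v, Finset.sum_sub_distrib]
    rw [Finset.sum_boole, Finset.sum_ite_eq' Finset.univ u fun _ => (1:ℝ)]
    simp [hT (block u)]
  have rowH : ∀ u, ∑ v, LH u v ≤ (n:ℝ) - 1 := by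
    intro u
    have h1 : ∀ v, LH u v ≤
        (if v.1 = u.1 then (1:ℝ) else 0) - (if v = u then 1 else 0) := by
      intro v
      rw [hH]
      by_cases h1 : v = u
      · subst h1; simp
      · rw [if_neg h1, sub_zero]
        by_cases h2 : u.1 = v.1 ∧ block u ≠ block v
        · rw [if_pos h2, if_pos h2.1.symm]
        · rw [if_neg h2]; split_ifs <;> norm_num
    calc ∑ v, LH u v ≤ ∑ v : Fin n × Fin n,
          ((if v.1 = u.1 then (1:ℝ) else 0) - (if v = u then 1 else 0)) :=
        Finset.sum_le_sum fun v _ => h1 v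
      _ = (n:ℝ) - 1 := by
        rw [Finset.sum_sub_distrib, hcol u.1,
          Finset.sum_ite_eq' Finset.univ u fun _ => (1:ℝ)]
        simp
  have rowV : ∀ u, ∑ v, LV u v ≤ (n:ℝ) - 1 := by
    intro u
    have h1 : ∀ v, LV u v ≤
        (if v.2 = u.2 then (1:ℝ) else 0) - (if v = u then 1 else 0) := by
      intro v
      rw [hV]
      by_cases h1 : v = u
      · subst h1; simp
      · rw [if_neg h1, sub_zero]
        by_cases h2 : u.2 = v.2 ∧ block u ≠ block v
        · rw [if_pos h2, if_pos h2.1.symm]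
        · rw [if_neg h2]; split_ifs <;> norm_num
    calc ∑ v, LV u v ≤ ∑ v : Fin n × Fin n,
          ((if v.2 = u.2 then (1:ℝ) else 0) - (if v = u then 1 else 0)) :=
        Finset.sum_le_sum fun v _ => h1 v
      _ = (n:ℝ) - 1 := by
        rw [Finset.sum_sub_distrib, hrow u.2,
          Finset.sum_ite_eq' Finset.univ u fun _ => (1:ℝ)]
        simp
  -- M and its PSD bound
  have hMh : (((k : ℝ) ^ 2) • LB + (k : ℝ) • LH + (k : ℝ) • LV).IsHermitian :=
    ((herm_smul hLBh _).add (herm_smul hLHh _)).add (herm_smul hLVh _)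
  have hpsdM := psd_of_spectrum_le _ hMh lam hmax
  -- Part 2 : lam ≥ (n-1) k²
  have part2 : ((n : ℝ) - 1) * (k : ℝ) ^ 2 ≤ lam := by
    have h1 := hpsdM.dotProduct_mulVec_nonneg (fun _ => 1)
    have hmv : ((lam • 1 - (((k : ℝ) ^ 2) • LB + (k : ℝ) • LH + (k : ℝ) • LV)).mulVec
        (fun _ => (1:ℝ))) = fun u => lam -
          ((k:ℝ)^2 * ∑ v, LB u v + (k:ℝ) * ∑ v, LH u v + (k:ℝ) * ∑ v, LV u v) := by
      funext u
      rw [Matrix.sub_mulVec, Matrix.smul_mulVec, Matrix.one_mulVec]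
      simp only [Pi.sub_apply, Pi.smul_apply, smul_eq_mul, mul_one]
      congr 1
      simp [Matrix.mulVec, dotProduct, Matrix.add_apply, Matrix.smul_apply,
        Finset.sum_add_distrib, Finset.mul_sum]
    rw [hmv] at h1
    have hdot : dotProduct (star fun _ : Fin n × Fin n => (1:ℝ))
        (fun u => lam - ((k:ℝ)^2 * ∑ v, LB u v + (k:ℝ) * ∑ v, LH u v
          + (k:ℝ) * ∑ v, LV u v)) =
        ∑ u : Fin n × Fin n, (lam - ((k:ℝ)^2 * ∑ v, LB u v + (k:ℝ) * ∑ v, LH u v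
          + (k:ℝ) * ∑ v, LV u v)) := by
      simp [dotProduct]
    rw [hdot] at h1
    have hcard : (Finset.univ : Finset (Fin n × Fin n)).card = n * n := by
      simp
    have hsum : ∑ u : Fin n × Fin n, (lam - ((k:ℝ)^2 * ∑ v, LB u v + (k:ℝ) * ∑ v, LH u v
          + (k:ℝ) * ∑ v, LV u v)) ≤ (n:ℝ)^2 * lam - (n:ℝ)^2 * (((n:ℝ)-1) * (k:ℝ)^2) := by
      have : ∀ u : Fin n × Fin n, (lam - ((k:ℝ)^2 * ∑ v, LB u v + (k:ℝ) * ∑ v, LH u v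
          + (k:ℝ) * ∑ v, LV u v)) ≤ lam - ((n:ℝ)-1) * (k:ℝ)^2 := by
        intro u
        have h2 := rowB u
        have h3 : 0 ≤ ∑ v, LH u v := Finset.sum_nonneg fun v _ => hLH0 u v
        have h4 : 0 ≤ ∑ v, LV u v := Finset.sum_nonneg fun v _ => hLV0 u v
        nlinarith
      calc _ ≤ ∑ _u : Fin n × Fin n, (lam - ((n:ℝ)-1)*(k:ℝ)^2) :=
            Finset.sum_le_sum fun u _ => this u
        _ = (n:ℝ)^2 * lam - (n:ℝ)^2 * (((n:ℝ)-1) * (k:ℝ)^2) := by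
            rw [Finset.sum_const, hcard]
            push_cast
            ring
    have hn2 : (0:ℝ) < (n:ℝ)^2 := by positivity
    nlinarith
  refine ⟨?_, part2, ?_, ?_⟩
  · -- Part 1
    constructor
    · -- membership
      obtain ⟨x, hx0, hx⟩ := (mem_spectrum_iff_eigenvector _ _).mp hlam
      set w : Fin k × Fin k → ℝ := fun _ => (1:ℝ) with hw
      refine (mem_spectrum_iff_eigenvector _ _).mpr ⟨fun p => x p.1 * w p.2, ?_, ?_⟩
      · obtain ⟨u, hu⟩ := Function.ne_iff.mp hx0
        intro h0
        have h1 := congrFun h0 (u, (⟨0, hk⟩, ⟨0, hk⟩))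
        simp [hw] at h1
        exact hu h1
      · rw [Ahat_mulVec n k LB LH LV x w]
        have h1s : (Jmat k).mulVec (fun _ => (1:ℝ)) = fun _ => (k:ℝ) := by
          funext i; simp [Jmat, Matrix.mulVec, dotProduct]
        have hww : w = fun q : Fin k × Fin k =>
            (fun _ : Fin k => (1:ℝ)) q.1 * (fun _ : Fin k => (1:ℝ)) q.2 := by
          funext q; simp [hw]
        rw [hww, kron_mulVec (Jmat k) (Jmat k) (fun _ : Fin k => (1:ℝ)) (fun _ : Fin k => (1:ℝ)),
          kron_mulVec 1 (Jmat k) (fun _ : Fin k => (1:ℝ)) (fun _ : Fin k => (1:ℝ)),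
          kron_mulVec (Jmat k) 1 (fun _ : Fin k => (1:ℝ)) (fun _ : Fin k => (1:ℝ)),
          h1s, Matrix.one_mulVec]
        funext p
        have hMx := congrFun hx p.1
        simp only [Matrix.add_mulVec, Matrix.smul_mulVec, Pi.add_apply,
          Pi.smul_apply, smul_eq_mul] at hMx
        simp only [Pi.smul_apply, smul_eq_mul]
        linear_combination hMx
    · -- maximality
      set R : Matrix (Fin k) (Fin k) ℝ := (k:ℝ) • 1 - Jmat k with hR
      have hJh : (Jmat k).IsHermitian := by
        ext i j; simp [Jmat, Matrix.conjTranspose_apply]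
      have hJJ : Jmat k * Jmat k = (k:ℝ) • Jmat k := by
        ext i j; simp [Jmat, Matrix.mul_apply]
      have hJpsd : (Jmat k).PosSemidef := psd_of_sq hJh hkpos hJJ
      have hRh : R.IsHermitian := (herm_smul Matrix.isHermitian_one _).sub hJh
      have hRR : R * R = (k:ℝ) • R := by
        rw [hR, Matrix.sub_mul, Matrix.mul_sub, Matrix.mul_sub, hJJ]
        simp only [Matrix.smul_mul, Matrix.mul_smul, Matrix.one_mul, Matrix.mul_one]
        module
      have hRpsd : R.PosSemidef := psd_of_sq hRh hkpos hRR
      have c0nn : (0:ℝ) ≤ lam + (k:ℝ)^2 := by nlinarith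
      have hkH : ∀ μ ∈ spectrum ℝ ((k:ℝ) • LH), μ ≤ lam + (k:ℝ)^2 := by
        apply spectrum_le_row_sums
        · intro i; simp [Matrix.smul_apply, hLHd]
        · intro i j
          have := hLH0 i j
          simp only [Matrix.smul_apply, smul_eq_mul]
          positivity
        · intro i
          have hsum : ∑ j, ((k:ℝ) • LH) i j = (k:ℝ) * ∑ j, LH i j := by
            simp [Matrix.smul_apply, Finset.mul_sum]
          rw [hsum]
          have := rowH i
          nlinarith
      have hkV : ∀ μ ∈ spectrum ℝ ((k:ℝ) • LV), μ ≤ lam + (k:ℝ)^2 := by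
        apply spectrum_le_row_sums
        · intro i; simp [Matrix.smul_apply, hLVd]
        · intro i j
          have := hLV0 i j
          simp only [Matrix.smul_apply, smul_eq_mul]
          positivity
        · intro i
          have hsum : ∑ j, ((k:ℝ) • LV) i j = (k:ℝ) * ∑ j, LV i j := by
            simp [Matrix.smul_apply, Finset.mul_sum]
          rw [hsum]
          have := rowV i
          nlinarith
      have hpsd2 := psd_of_spectrum_le _ (herm_smul hLHh (k:ℝ)) _ hkH
      have hpsd3 := psd_of_spectrum_le _ (herm_smul hLVh (k:ℝ)) _ hkV
      have hident : (lam + (k:ℝ)^2 - 1) • (1 : Matrix ((Fin n × Fin n) × (Fin k × Fin k))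
            ((Fin n × Fin n) × (Fin k × Fin k)) ℝ) - AhatCells n k LB LH LV
          = (((k:ℝ)^2)⁻¹ • ((lam • 1 - (((k:ℝ)^2) • LB + (k:ℝ) • LH + (k:ℝ) • LV))
              ⊗ₖ (Jmat k ⊗ₖ Jmat k)))
          + (((k:ℝ)^2)⁻¹ • (((lam + (k:ℝ)^2) • 1 - (k:ℝ) • LH) ⊗ₖ (R ⊗ₖ Jmat k)))
          + (((k:ℝ)^2)⁻¹ • (((lam + (k:ℝ)^2) • 1 - (k:ℝ) • LV) ⊗ₖ (Jmat k ⊗ₖ R)))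
          + ((((k:ℝ)^2)⁻¹ * (lam + (k:ℝ)^2)) •
              ((1 : Matrix (Fin n × Fin n) (Fin n × Fin n) ℝ) ⊗ₖ (R ⊗ₖ R))) := by
        ext p q
        obtain ⟨u, a, b⟩ := p
        obtain ⟨v, c, d⟩ := q
        simp only [hR, AhatCells, Matrix.add_apply, Matrix.sub_apply, Matrix.smul_apply,
          Matrix.kroneckerMap_apply, Matrix.one_apply, Jmat, Matrix.of_apply, smul_eq_mul,
          Prod.mk.injEq]
        by_cases h1 : u = v <;> by_cases h2 : a = c <;> by_cases h3 : b = d <;>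
          simp only [h1, h2, h3, if_true, if_false, and_true, and_false, true_and,
            false_and, if_neg, ite_true, ite_false, eq_self_iff_true, not_true,
            not_false_iff] <;>
          field_simp <;> ring
      have hinv : (0:ℝ) ≤ ((k:ℝ)^2)⁻¹ := by positivity
      have htot : ((lam + (k:ℝ)^2 - 1) • (1 : Matrix ((Fin n × Fin n) × (Fin k × Fin k))
          ((Fin n × Fin n) × (Fin k × Fin k)) ℝ) - AhatCells n k LB LH LV).PosSemidef := by
        rw [hident]
        exact (((psd_smul (psd_kron hpsdM (psd_kron hJpsd hJpsd)) hinv).add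
          (psd_smul (psd_kron hpsd2 (psd_kron hRpsd hJpsd)) hinv)).add
          (psd_smul (psd_kron hpsd3 (psd_kron hJpsd hRpsd)) hinv)).add
          (psd_smul (psd_kron Matrix.PosSemidef.one (psd_kron hRpsd hRpsd))
            (by positivity))
      exact spectrum_le_of_psd _ _ htot
  · -- Part 3
    intro lam' alpha hlam' halpha
    have hl : lam' ≤ (n:ℝ) - 1 := by
      rcases hlam' with h | h
      · exact spectrum_le_row_sums LV ((n:ℝ)-1) hLVd hLV0 rowV lam' h
      · exact spectrum_le_row_sums LH ((n:ℝ)-1) hLHd hLH0 rowH lam' h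
    have halpha' : alpha = 0 ∨ alpha = (k:ℝ) := by
      obtain ⟨v, hv0, hv⟩ := (mem_spectrum_iff_eigenvector _ _).mp halpha
      have hs : ∀ i, alpha * v i = ∑ j, v j := by
        intro i
        have h1 := congrFun hv i
        simp only [Matrix.mulVec, dotProduct, Jmat, Matrix.of_apply, one_mul,
          Pi.smul_apply, smul_eq_mul] at h1
        exact h1.symm
      by_cases hα0 : alpha = 0
      · exact Or.inl hα0
      · right
        set s := ∑ j, v j with hsdef
        have hvconst : ∀ i, v i = s / alpha := by
          intro i
          field_simp
          linarith [hs i]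
        have hs0 : s ≠ 0 := by
          intro h0
          exact hv0 (funext fun i => by simp [hvconst i, h0])
        have hkey : s = (k:ℝ) * (s / alpha) := by
          conv_lhs => rw [hsdef]
          rw [Finset.sum_congr rfl fun j _ => hvconst j]
          simp [Finset.sum_const, mul_comm]
        have : alpha * s = (k:ℝ) * s := by
          field_simp at hkey
          rw [hkey]
        exact mul_right_cancel₀ hs0 this
    rcases halpha' with rfl | rfl
    · have : (0:ℝ) ≤ ((n:ℝ)-1) * k := by nlinarith
      nlinarith
    · have h2 : lam' * (k:ℝ) ≤ ((n:ℝ)-1) * k :=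
        mul_le_mul_of_nonneg_right hl (le_of_lt hkpos)
      linarith
  · -- Part 4
    intro x y z hy hz
    set w : Fin k × Fin k → ℝ := fun q => y q.1 * z q.2 with hw
    have hvec : (fun p : (Fin n × Fin n) × (Fin k × Fin k) => x p.1 * y p.2.1 * z p.2.2)
        = (fun p : (Fin n × Fin n) × (Fin k × Fin k) => x p.1 * w p.2) :=
      funext fun p => mul_assoc _ _ _
    rw [hvec, Ahat_mulVec n k LB LH LV x w, hw, kron_mulVec (Jmat k) (Jmat k) y z,
      kron_mulVec 1 (Jmat k) y z, kron_mulVec (Jmat k) 1 y z]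
    funext p
    simp [hy, hz, Matrix.one_mulVec]
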